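/- (Supporting claim, backward direction of Proposition 1) Suppose x ∈ X satisfies disjunct d ∈ D, i.e., Σ_{i=1}^n h_{i,d}(x_i) ≤ b_d. Define λ_d = 1 and λ_l = 0 for l ≠ d; α^l_s = Σ_{i∈I_s} h_{i,l}(x_i) for all l ∈ D, s ∈ {1,…,P}; ν^l_{s,d} = α^l_s and ν^l_{s,d'} = 0 for d' ≠ d. Then (x, α, ν, λ) satisfies all constraints of the P-split formulation. -/

import Mathlib

/-- The constraint system of the P-split formulation (extended convex-hull
formulation of the P-split representation). -/
def PSplitSystem {n : ℕ} {D : Type} [Fintype D] {P : ℕ}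
    (X : Set (Fin n → ℝ)) (b : D → ℝ) (h : Fin n → D → ℝ → ℝ)
    (I : Fin P → Finset (Fin n)) (αlo αhi : D → Fin P → ℝ)
    (x : Fin n → ℝ) (α : D → Fin P → ℝ) (ν : D → Fin P → D → ℝ)
    (lam : D → ℝ) : Prop :=
  x ∈ X ∧
  (∀ l s, α l s = ∑ d, ν l s d) ∧
  (∀ l, ∑ s, ν l s l ≤ b l * lam l) ∧
  (∀ l s d, αlo l s * lam d ≤ ν l s d ∧ ν l s d ≤ αhi l s * lam d) ∧
  (∀ l s, ∑ i ∈ I s, h i l (x i) ≤ α l s) ∧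
  (∑ l, lam l = 1)

theorem Finset.sum_sum_eq_sum_of_existsUnique_mem {ι α M : Type*} [Fintype ι] [Fintype α]
    [AddCommMonoid M] (I : ι → Finset α) (hI : ∀ a, ∃! s, a ∈ I s) (f : α → M) :
    ∑ s, ∑ a ∈ I s, f a = ∑ a, f a := by
  classical
  have hdisj : (Set.univ : Set ι).PairwiseDisjoint I := fun s _ t _ hst =>
    Finset.disjoint_left.2 fun a has hat => hst ((hI a).unique has hat)
  have hcover : Finset.univ.biUnion I = Finset.univ :=
    Finset.eq_univ_of_forall fun a => Finset.mem_biUnion.2 <|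
      let ⟨s, hs, _⟩ := hI a; ⟨s, Finset.mem_univ s, hs⟩
  rw [← Finset.sum_biUnion (by simpa using hdisj), hcover]

theorem mul_ite_le_ite_and_ite_le_mul {R : Type*} [MulZeroOneClass R] [Preorder R] {lo v hi : R}
    (hlo : lo ≤ v) (hhi : v ≤ hi) (p : Prop) [Decidable p] :
    lo * (if p then 1 else 0) ≤ (if p then v else 0) ∧
      (if p then v else 0) ≤ hi * (if p then 1 else 0) := by
  split_ifs <;> simp [hlo, hhi]

theorem psplit_binary_backward_general
    {n : ℕ}
    {D : Type} [Fintype D] [DecidableEq D]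
    (b : D → ℝ) (h : Fin n → D → ℝ → ℝ)
    (X : Set (Fin n → ℝ))
    {P : ℕ} (I : Fin P → Finset (Fin n))
    (hpart : ∀ i : Fin n, ∃! s, i ∈ I s)
    (αlo αhi : D → Fin P → ℝ)
    (hlo : ∀ l s, IsLeast ((fun x => ∑ i ∈ I s, h i l (x i)) '' X) (αlo l s))
    (hhi : ∀ l s, IsGreatest ((fun x => ∑ i ∈ I s, h i l (x i)) '' X) (αhi l s))
    (x : Fin n → ℝ) (hx : x ∈ X)
    (d : D) (hd : ∑ i, h i d (x i) ≤ b d) :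
    PSplitSystem X b h I αlo αhi x
      (fun l s => ∑ i ∈ I s, h i l (x i))
      (fun l s d' => if d' = d then ∑ i ∈ I s, h i l (x i) else 0)
      (fun l => if l = d then (1 : ℝ) else 0) ∧
    (∀ l : D, (if l = d then (1 : ℝ) else 0) = 0 ∨
      (if l = d then (1 : ℝ) else 0) = 1) := by
  refine ⟨⟨hx, fun l s => by simp, fun l => ?_, fun l s d' => ?_, fun _ _ => le_rfl, by simp⟩,
    fun l => by split_ifs <;> simp⟩
  · dsimp only
    split_ifs with hl
    · subst hl
      simpa [Finset.sum_sum_eq_sum_of_existsUnique_mem I hpart] using hd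
    · simp
  · exact mul_ite_le_ite_and_ite_le_mul ((hlo l s).2 ⟨x, hx, rfl⟩) ((hhi l s).2 ⟨x, hx, rfl⟩) _

/-- **Backward direction of Proposition 1.** If x ∈ X satisfies disjunct d,
then the canonical assignment λ_d = 1 (0 elsewhere), α^l_s = Σ_{i∈I_s} h_{i,l}(x_i),
ν^l_{s,d} = α^l_s (0 for other disjunct indices) satisfies all constraints of the
P-split formulation. -/
theorem psplit_binary_backward
    {n : ℕ} (hn : 1 ≤ n)
    {D : Type} [Fintype D] [Nonempty D] [DecidableEq D]
    (b : D → ℝ) (h : Fin n → D → ℝ → ℝ)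
    (hconv : ∀ i l, ConvexOn ℝ Set.univ (h i l))
    (X : Set (Fin n → ℝ)) (hXne : X.Nonempty) (hXconv : Convex ℝ X)
    (hXcomp : IsCompact X)
    {P : ℕ} (I : Fin P → Finset (Fin n))
    (hIne : ∀ s, (I s).Nonempty)
    (hpart : ∀ i : Fin n, ∃! s, i ∈ I s)
    (αlo αhi : D → Fin P → ℝ)
    (hlo : ∀ l s, IsLeast ((fun x => ∑ i ∈ I s, h i l (x i)) '' X) (αlo l s))
    (hhi : ∀ l s, IsGreatest ((fun x => ∑ i ∈ I s, h i l (x i)) '' X) (αhi l s))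
    (x : Fin n → ℝ) (hx : x ∈ X)
    (d : D) (hd : ∑ i, h i d (x i) ≤ b d) :
    PSplitSystem X b h I αlo αhi x
      (fun l s => ∑ i ∈ I s, h i l (x i))
      (fun l s d' => if d' = d then ∑ i ∈ I s, h i l (x i) else 0)
      (fun l => if l = d then (1 : ℝ) else 0) ∧
    (∀ l : D, (if l = d then (1 : ℝ) else 0) = 0 ∨
      (if l = d then (1 : ℝ) else 0) = 1) :=
  psplit_binary_backward_general b h X I hpart αlo αhi hlo hhi x hx d hd
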